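/- The language L₂' = { w x y : |w| = |x|, 2|w| = |y|, w a nonempty string over {1,2}, x a string over {3,6}, y a string over {5,10,15,30} } over the alphabet {1,2,3,6,5,10,15,30} is CFL-immune; that is, L₂' is infinite and no infinite subset of L₂' is a context-free language. -/

import Mathlib

/-!
A context-free language with arbitrarily long words contains a family `u vⁱ z xⁱ y`, `i ∈ ℕ`,
with `v x ≠ []`. Follow a derivation of a word `w`, always descending into a symbol of the
current rule that derives a longest part of the yield. A step with non-empty terminal context
divides the length of the yield by at most `m`, the longest right-hand side, and a step with
empty context keeps it. If no productive nonterminal `D` reachable from the start symbol has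
`D ⇒* v D x` with `v x ≠ []`, each nonterminal is passed at most once with non-empty context,
so `|w| ≤ m ^ (k + 1)` for `k` the number of nonterminals with rules.

An infinite subset of L₂' has arbitrarily long words, since L₂' uses eight letters only.
Sending each letter to the index of its block maps L₂' into `{1ᵏ 2ᵏ 3²ᵏ}`. Comparing `u z y`
with `u v z x y` shows that `v x` has letters of all three blocks, while sortedness of
`u v v z x x y` confines each of `v` and `x` to a single block.
-/

/-- `L` is CFL-immune: `L` is infinite and no infinite subset of `L` is context-free. -/
def CFLImmune {T : Type} (L : Language T) : Prop :=
  Set.Infinite (L : Set (List T)) ∧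
    ∀ M : Language T, M ≤ L → Set.Infinite (M : Set (List T)) → ¬ M.IsContextFree

/-- L₂' = { w x y : |w| = |x|, 2|w| = |y|, w nonempty over {1,2}, x over {3,6},
y over {5,10,15,30} }. -/
def L2' : Language ℕ :=
  {s | ∃ w x y : List ℕ, w ≠ [] ∧ (∀ a ∈ w, a = 1 ∨ a = 2) ∧
    (∀ a ∈ x, a = 3 ∨ a = 6) ∧ (∀ a ∈ y, a = 5 ∨ a = 10 ∨ a = 15 ∨ a = 30) ∧
    w.length = x.length ∧ 2 * w.length = y.length ∧ s = w ++ x ++ y}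

namespace ContextFreeRule

variable {T N : Type*} {r : ContextFreeRule T N}

theorem Rewrites.append_cases :
    ∀ {p q v : List (Symbol T N)}, r.Rewrites (p ++ q) v →
      (∃ p', r.Rewrites p p' ∧ v = p' ++ q) ∨ (∃ q', r.Rewrites q q' ∧ v = p ++ q')
  | [], _, _, h => .inr ⟨_, h, rfl⟩
  | _ :: _, _, _, .head _ => .inl ⟨_, .head _, by simp⟩
  | a :: _, _, _, .cons _ h => by
    rcases append_cases h with ⟨p', hp, rfl⟩ | ⟨q', hq, rfl⟩
    · exact .inl ⟨a :: p', hp.cons a, rfl⟩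
    · exact .inr ⟨q', hq, rfl⟩

end ContextFreeRule

namespace ContextFreeGrammar

variable {T : Type*}

inductive DerivesIn (g : ContextFreeGrammar T) :
    List (Symbol T g.NT) → List (Symbol T g.NT) → ℕ → Prop
  | refl (u : List (Symbol T g.NT)) : g.DerivesIn u u 0
  | head {u v w : List (Symbol T g.NT)} {n : ℕ} :
      g.Produces u v → g.DerivesIn v w n → g.DerivesIn u w (n + 1)

def Embeds (g : ContextFreeGrammar T) (A B : g.NT) (u y : List T) : Prop :=
  g.Derives [.nonterminal A] (u.map .terminal ++ .nonterminal B :: y.map .terminal)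

def maxOutputLength (g : ContextFreeGrammar T) : ℕ :=
  g.rules.sup fun r => r.output.length

variable {g : ContextFreeGrammar T}

theorem DerivesIn.derives {u v : List (Symbol T g.NT)} {n : ℕ} (h : g.DerivesIn u v n) :
    g.Derives u v := by
  induction h with
  | refl => exact .refl _
  | head hp _ ih => exact hp.trans_derives ih

theorem Derives.exists_derivesIn {u v : List (Symbol T g.NT)} (h : g.Derives u v) :
    ∃ n, g.DerivesIn u v n := by
  induction h using Relation.ReflTransGen.head_induction_on with
  | refl => exact ⟨0, .refl _⟩
  | head hp _ ih => obtain ⟨n, hn⟩ := ih; exact ⟨n + 1, .head hp hn⟩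

theorem DerivesIn.append_split {p q w : List (Symbol T g.NT)} {n : ℕ}
    (h : g.DerivesIn (p ++ q) w n) :
    ∃ a b n₁ n₂, w = a ++ b ∧ n₁ + n₂ = n ∧ g.DerivesIn p a n₁ ∧ g.DerivesIn q b n₂ := by
  induction n generalizing p q with
  | zero => cases h; exact ⟨p, q, 0, 0, rfl, rfl, .refl _, .refl _⟩
  | succ n ih =>
    obtain _ | ⟨⟨r, hr, hrw⟩, hd⟩ := h
    rcases hrw.append_cases with ⟨p', hp, rfl⟩ | ⟨q', hq, rfl⟩
    · obtain ⟨a, b, n₁, n₂, rfl, hn, h₁, h₂⟩ := ih hd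
      exact ⟨a, b, n₁ + 1, n₂, rfl, by omega, .head ⟨r, hr, hp⟩ h₁, h₂⟩
    · obtain ⟨a, b, n₁, n₂, rfl, hn, h₁, h₂⟩ := ih hd
      exact ⟨a, b, n₁, n₂ + 1, rfl, by omega, h₁, .head ⟨r, hr, hq⟩ h₂⟩

theorem Derives.eq_of_map_terminal {w : List T} {v : List (Symbol T g.NT)}
    (h : g.Derives (w.map .terminal) v) : v = w.map .terminal := by
  induction h with
  | refl => rfl
  | tail _ hp ih =>
    subst ih
    obtain ⟨r, -, hr⟩ := hp
    simpa using hr.nonterminal_input_mem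

theorem DerivesIn.exists_large_part :
    ∀ {s : List (Symbol T g.NT)} {w : List T} {n : ℕ}, g.DerivesIn s (w.map .terminal) n →
      s ≠ [] → ∃ s₁ X s₂ a w' b n', s = s₁ ++ X :: s₂ ∧ w = a ++ w' ++ b ∧ n' ≤ n ∧
        g.Derives s₁ (a.map .terminal) ∧ g.DerivesIn [X] (w'.map .terminal) n' ∧
        g.Derives s₂ (b.map .terminal) ∧ w.length ≤ s.length * w'.length
  | [X], w, n, h, _ => ⟨[], X, [], [], w, [], n, rfl, by simp, le_rfl, .refl _, h, .refl _,
      by simp⟩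
  | X :: Y :: s, w, n, h, _ => by
    obtain ⟨w₁, w₂, n₁, n₂, hw, hn, h₁, h₂⟩ := DerivesIn.append_split (p := [X]) (q := Y :: s) h
    obtain ⟨a₁, a₂, rfl, rfl, rfl⟩ := List.map_eq_append_iff.mp hw
    obtain ⟨s₁, Z, s₂, a, w', b, n', hs, rfl, hn', ha, hZ, hb, hlen⟩ :=
      exists_large_part h₂ (List.cons_ne_nil _ _)
    simp only [List.length_append, List.length_cons] at hlen ⊢
    rcases le_total a₁.length w'.length with hle | hle
    · refine ⟨X :: s₁, Z, s₂, a₁ ++ a, w', b, n', by simp [hs], by simp, by omega, ?_, hZ, hb,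
        by nlinarith⟩
      simpa using (h₁.derives.append_right s₁).trans (ha.append_left _)
    · refine ⟨[], X, Y :: s, [], a₁, a ++ w' ++ b, n₁, rfl, by simp, by omega, .refl _, h₁,
        h₂.derives, by nlinarith⟩

theorem Embeds.refl (A : g.NT) : g.Embeds A A [] [] := Derives.refl _

theorem Embeds.trans {A B C : g.NT} {u y u' y' : List T} (h₁ : g.Embeds A B u y)
    (h₂ : g.Embeds B C u' y') : g.Embeds A C (u ++ u') (y' ++ y) := by
  simpa [Embeds] using Derives.trans h₁ ((h₂.append_right _).append_left _)

theorem Embeds.derives {A B : g.NT} {u y z : List T} (h : g.Embeds A B u y)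
    (hB : g.Derives [.nonterminal B] (z.map .terminal)) :
    g.Derives [.nonterminal A] ((u ++ z ++ y).map .terminal) := by
  simpa using Derives.trans h ((hB.append_right _).append_left _)

theorem Embeds.iterate {A : g.NT} {v x : List T} (h : g.Embeds A A v x) (i : ℕ) :
    g.Embeds A A (List.replicate i v).flatten (List.replicate i x).flatten := by
  induction i with
  | zero => exact .refl A
  | succ i ih =>
    have hx : (List.replicate (i + 1) x).flatten = (List.replicate i x).flatten ++ x := by
      simp [List.replicate_succ']
    rw [hx]
    simpa [List.replicate_succ] using h.trans ih

theorem embeds_of_mem_rules {r : ContextFreeRule T g.NT} (hr : r ∈ g.rules) {C : g.NT}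
    {s₁ s₂ : List (Symbol T g.NT)} (hsplit : r.output = s₁ ++ .nonterminal C :: s₂) {a b : List T}
    (ha : g.Derives s₁ (a.map .terminal)) (hb : g.Derives s₂ (b.map .terminal)) :
    g.Embeds r.input C a b := by
  refine Produces.trans_derives ⟨r, hr, .input_output⟩ ?_
  rw [hsplit]
  exact (ha.append_right _).trans ((hb.append_left [_]).append_left _)

theorem DerivesIn.exists_rule {B : g.NT} {w : List T} {n : ℕ}
    (h : g.DerivesIn [.nonterminal B] (w.map .terminal) n) :
    ∃ r ∈ g.rules, r.input = B ∧
      ∃ n', n = n' + 1 ∧ g.DerivesIn r.output (w.map .terminal) n' := by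
  generalize hu : [Symbol.nonterminal B] = u at h
  obtain _ | ⟨⟨r, hr, hrw⟩, hd⟩ := h
  · cases w <;> simp at hu
  · subst hu
    obtain _ | ⟨_, ⟨⟩⟩ := hrw
    exact ⟨r, hr, rfl, _, rfl, by simpa using hd⟩

theorem DerivesIn.length_le_pow {B : g.NT} {w : List T} {n : ℕ}
    (h : g.DerivesIn [.nonterminal B] (w.map .terminal) n) {V : Finset g.NT}
    (hV : ∀ D (u y z : List T), u ++ y ≠ [] → g.Embeds B D u y →
      g.Derives [.nonterminal D] (z.map .terminal) → D ∈ V)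
    (hB : ∀ D (u y z v x : List T), g.Embeds B D u y →
      g.Derives [.nonterminal D] (z.map .terminal) → g.Embeds D D v x → v ++ x = []) :
    w.length ≤ g.maxOutputLength ^ (V.card + 1) := by
  classical
  induction n using Nat.strong_induction_on generalizing B w V with
  | _ n ih =>
  obtain ⟨r, hr, rfl, n, rfl, hs⟩ := h.exists_rule
  have hm : r.output.length ≤ g.maxOutputLength :=
    Finset.le_sup (f := fun r => r.output.length) hr
  rcases eq_or_ne r.output [] with hnil | hne
  · rw [hnil] at hs
    have := (hs.derives.eq_of_map_terminal (w := [])).symm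
    simp_all
  obtain ⟨s₁, X, s₂, a, w', b, n', hsplit, rfl, hn', ha, hX, hb, hlen⟩ := hs.exists_large_part hne
  have hm₀ : 0 < g.maxOutputLength := (List.length_pos_iff.2 hne).trans_le hm
  cases X with
  | terminal t =>
    obtain rfl : w' = [t] := by simpa using hX.derives.eq_of_map_terminal (w := [t])
    calc (a ++ [t] ++ b).length ≤ r.output.length * 1 := by simpa using hlen
      _ ≤ g.maxOutputLength ^ (V.card + 1) := by
        simpa using hm.trans (Nat.le_self_pow (Nat.succ_ne_zero _) _)
  | nonterminal C =>
    have hBC := embeds_of_mem_rules hr hsplit ha hb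
    have hC := hX.derives
    have hw' : w'.length ≤ g.maxOutputLength ^ ((V.erase C).card + 1) := by
      refine ih n' (by omega) hX (fun D u y z huy hCD hD => ?_)
        (fun D u y z v x hCD hD => hB D (a ++ u) (y ++ b) z v x (hBC.trans hCD) hD)
      refine Finset.mem_erase.2 ⟨?_, hV D (a ++ u) (y ++ b) z ?_ (hBC.trans hCD) hD⟩
      · rintro rfl
        exact huy (hB D a b w' u y hBC hC hCD)
      · intro h
        simp only [List.append_eq_nil_iff] at h
        simp [h] at huy
    by_cases hab : a ++ b = []
    · obtain ⟨rfl, rfl⟩ := List.append_eq_nil_iff.1 hab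
      simpa using hw'.trans (Nat.pow_le_pow_right hm₀ (by simp [Finset.card_erase_le]))
    · have hCV := hV C a b w' hab hBC hC
      calc (a ++ w' ++ b).length ≤ r.output.length * w'.length := hlen
        _ ≤ g.maxOutputLength * g.maxOutputLength ^ ((V.erase C).card + 1) :=
          Nat.mul_le_mul hm hw'
        _ = g.maxOutputLength ^ (V.card + 1) := by
          rw [Finset.card_erase_add_one hCV, pow_succ']

end ContextFreeGrammar

open ContextFreeGrammar in
theorem Language.IsContextFree.exists_pumping {T : Type*} {L : Language T}
    (hL : L.IsContextFree) :
    ∃ N, ∀ w ∈ L, N < w.length → ∃ u v z x y : List T, v ++ x ≠ [] ∧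
      ∀ i, u ++ (List.replicate i v).flatten ++ z ++ (List.replicate i x).flatten ++ y ∈ L := by
  classical
  obtain ⟨g, rfl⟩ := hL
  refine ⟨g.maxOutputLength ^ ((g.rules.image (·.input)).card + 1), fun w hw hlen => ?_⟩
  obtain ⟨D, u, y, z, v, x, hSD, hD, hDD, hvx⟩ : ∃ (D : g.NT) (u y z v x : List T),
      g.Embeds g.initial D u y ∧ g.Derives [.nonterminal D] (z.map .terminal) ∧
        g.Embeds D D v x ∧ v ++ x ≠ [] := by
    by_contra! hB
    obtain ⟨n, hn⟩ := Derives.exists_derivesIn hw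
    refine hlen.not_ge (hn.length_le_pow (fun D _ _ _ _ _ hD => ?_) hB)
    obtain ⟨n, hn⟩ := hD.exists_derivesIn
    obtain ⟨r, hr, rfl, -⟩ := hn.exists_rule
    exact Finset.mem_image_of_mem _ hr
  exact ⟨u, v, z, x, y, hvx, fun i => by simpa using (hSD.trans (hDD.iterate i)).derives hD⟩

theorem Set.Infinite.exists_lt_length {α : Type*} {W : Set (List α)} (hW : W.Infinite)
    {S : Set α} (hS : S.Finite) (hWS : ∀ w ∈ W, ∀ a ∈ w, a ∈ S) (N : ℕ) :
    ∃ w ∈ W, N < w.length := by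
  have := hS.to_subtype
  by_contra! h
  refine hW (((List.finite_length_le S N).image (List.map Subtype.val)).subset fun w hw => ?_)
  exact ⟨w.pmap Subtype.mk (hWS w hw), by simpa using h w hw, by simp [List.map_pmap]⟩

theorem List.eq_of_mem_of_pairwise_append_self {α : Type*} [PartialOrder α] {l : List α}
    (h : (l ++ l).Pairwise (· ≤ ·)) : ∀ a ∈ l, ∀ b ∈ l, a = b :=
  have hle := (List.pairwise_append.1 h).2.2
  fun a ha b hb => le_antisymm (hle a ha b hb) (hle b hb a ha)

namespace L2'

def block (a : ℕ) : ℕ := if a = 1 ∨ a = 2 then 1 else if a = 3 ∨ a = 6 then 2 else 3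

def blockWord (k : ℕ) : List ℕ :=
  List.replicate k 1 ++ List.replicate k 2 ++ List.replicate (2 * k) 3

theorem length_blockWord (k : ℕ) : (blockWord k).length = 4 * k := by
  simp only [blockWord, List.length_append, List.length_replicate]
  omega

theorem pairwise_blockWord (k : ℕ) : (blockWord k).Pairwise (· ≤ ·) := by
  grind [blockWord]

theorem count_blockWord_strictMono {j : ℕ} (hj : j ∈ ({1, 2, 3} : Finset ℕ)) :
    StrictMono fun k => (blockWord k).count j := by
  intro k k' hk
  simp only [Finset.mem_insert, Finset.mem_singleton] at hj
  rcases hj with rfl | rfl | rfl <;>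
    simp only [blockWord, List.count_append, List.count_replicate, Nat.reduceBEq,
      Bool.false_eq_true, ↓reduceIte] <;> omega

theorem false_of_pump_blockWord {U V Z X Y : List ℕ} (hVX : V ++ X ≠ [])
    (h₀ : ∃ k, U ++ Z ++ Y = blockWord k) (h₁ : ∃ k, U ++ V ++ Z ++ X ++ Y = blockWord k)
    (h₂ : ∃ k, U ++ V ++ V ++ Z ++ X ++ X ++ Y = blockWord k) : False := by
  obtain ⟨k₀, hk₀⟩ := h₀
  obtain ⟨k₁, hk₁⟩ := h₁
  obtain ⟨k₂, hk₂⟩ := h₂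
  have hsorted := hk₂ ▸ pairwise_blockWord k₂
  have hV := List.eq_of_mem_of_pairwise_append_self (l := V) (hsorted.sublist
    (List.IsInfix.sublist ⟨U, Z ++ X ++ X ++ Y, by simp⟩))
  have hX := List.eq_of_mem_of_pairwise_append_self (l := X) (hsorted.sublist
    (List.IsInfix.sublist ⟨U ++ V ++ V ++ Z, Y, by simp⟩))
  have hk : k₀ < k₁ := by
    have h₀ := congrArg List.length hk₀
    have h₁ := congrArg List.length hk₁
    have : 0 < (V ++ X).length := List.length_pos_iff.2 hVX
    rw [List.length_append] at this
    simp only [List.length_append, length_blockWord] at h₀ h₁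
    omega
  have hsub : ({1, 2, 3} : Finset ℕ) ⊆ V.toFinset ∪ X.toFinset := by
    intro j hj
    have hlt := count_blockWord_strictMono hj hk
    simp only [← hk₀, ← hk₁, List.count_append] at hlt
    have : 0 < (V ++ X).count j := by rw [List.count_append]; omega
    simpa using List.count_pos_iff.1 this
  have hVcard : V.toFinset.card ≤ 1 := Finset.card_le_one.2 fun a ha b hb =>
    hV a (List.mem_toFinset.1 ha) b (List.mem_toFinset.1 hb)
  have hXcard : X.toFinset.card ≤ 1 := Finset.card_le_one.2 fun a ha b hb =>
    hX a (List.mem_toFinset.1 ha) b (List.mem_toFinset.1 hb)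
  have : 3 ≤ V.toFinset.card + X.toFinset.card :=
    (Finset.card_le_card hsub).trans (Finset.card_union_le _ _)
  omega

theorem exists_map_block_eq_blockWord {s : List ℕ} (hs : s ∈ L2') :
    ∃ k, s.map block = blockWord k := by
  obtain ⟨w, x, y, -, hw, hx, hy, hwx, hwy, rfl⟩ := hs
  refine ⟨w.length, ?_⟩
  have hw' : w.map block = List.replicate w.length 1 := List.map_eq_replicate_iff.2 fun a ha => by
    rcases hw a ha with rfl | rfl <;> rfl
  have hx' : x.map block = List.replicate x.length 2 := List.map_eq_replicate_iff.2 fun a ha => by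
    rcases hx a ha with rfl | rfl <;> rfl
  have hy' : y.map block = List.replicate y.length 3 := List.map_eq_replicate_iff.2 fun a ha => by
    rcases hy a ha with rfl | rfl | rfl | rfl <;> rfl
  rw [List.map_append, List.map_append, hw', hx', hy', ← hwx, ← hwy, blockWord]

theorem not_forall_pump_mem {u v z x y : List ℕ} (hvx : v ++ x ≠ []) :
    ¬ ∀ i, u ++ (List.replicate i v).flatten ++ z ++ (List.replicate i x).flatten ++ y ∈ L2' := by
  intro h
  refine false_of_pump_blockWord (U := u.map block) (V := v.map block) (Z := z.map block)
    (X := x.map block) (Y := y.map block) (by simpa using hvx) ?_ ?_ ?_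
  · simpa using exists_map_block_eq_blockWord (h 0)
  · simpa using exists_map_block_eq_blockWord (h 1)
  · simpa [List.replicate] using exists_map_block_eq_blockWord (h 2)

theorem mem_alphabet {s : List ℕ} (hs : s ∈ L2') {a : ℕ} (ha : a ∈ s) :
    a ∈ ({1, 2, 3, 6, 5, 10, 15, 30} : Finset ℕ) := by
  obtain ⟨w, x, y, -, hw, hx, hy, -, -, rfl⟩ := hs
  simp only [List.mem_append] at ha
  rcases ha with (ha | ha) | ha
  · rcases hw a ha with rfl | rfl <;> decide
  · rcases hx a ha with rfl | rfl <;> decide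
  · rcases hy a ha with rfl | rfl | rfl | rfl <;> decide

theorem infinite : (L2' : Set (List ℕ)).Infinite := by
  refine Set.infinite_of_injective_forall_mem (f := fun n => List.replicate (n + 1) 1 ++
    List.replicate (n + 1) 3 ++ List.replicate (2 * (n + 1)) 5) (fun m n hmn => ?_) fun n => ?_
  · have := congrArg List.length hmn
    simp only [List.length_append, List.length_replicate] at this
    omega
  · exact ⟨_, _, _, by simp, fun a ha => .inl (List.eq_of_mem_replicate ha),
      fun a ha => .inl (List.eq_of_mem_replicate ha),
      fun a ha => .inl (List.eq_of_mem_replicate ha), by simp, by simp, rfl⟩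

end L2'

/-- L₂' is CFL-immune. -/
theorem L2'_CFLImmune : CFLImmune L2' := by
  refine ⟨L2'.infinite, fun M hML hMinf hM => ?_⟩
  obtain ⟨N, hN⟩ := hM.exists_pumping
  obtain ⟨w, hwM, hw⟩ := hMinf.exists_lt_length (Finset.finite_toSet _)
    (fun w hw _ ha => L2'.mem_alphabet (hML hw) ha) N
  obtain ⟨u, v, z, x, y, hvx, hpump⟩ := hN w hwM hw
  exact L2'.not_forall_pump_mem hvx fun i => hML (hpump i)
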